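/- The energy per vertex of a k-regular graph Γ (k ≥ 1) is at least 1, with equality if and only if Γ is a disjoint union of copies of the complete bipartite graph K_{k,k}. -/

import Mathlib

set_option linter.unusedSectionVars false
open Finset

section Defs
variable {V : Type*} [Fintype V] [DecidableEq V]

theorem adjMatrix_isHermitian (G : SimpleGraph V) [DecidableRel G.Adj] :
    (SimpleGraph.adjMatrix ℝ G).IsHermitian := by
  ext i j
  simp [Matrix.conjTranspose_apply, SimpleGraph.adjMatrix_apply, SimpleGraph.adj_comm]

/-- The eigenvalues of the adjacency matrix of a graph. -/
noncomputable def adjEigs (G : SimpleGraph V) : V → ℝ := by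
  classical exact (adjMatrix_isHermitian G).eigenvalues

/-- The spectrum of the graph, as a multiset of real eigenvalues. -/
noncomputable def adjSpectrum (G : SimpleGraph V) : Multiset ℝ :=
  Finset.univ.val.map (adjEigs G)

/-- The energy per vertex of a graph. -/
noncomputable def epv (G : SimpleGraph V) : ℝ :=
  (∑ i, |adjEigs G i|) / (Fintype.card V)

/-- The disjoint union of an indexed family of graphs. -/
def sigmaGraph {ι : Type*} {W : ι → Type*} (G : ∀ i, SimpleGraph (W i)) :
    SimpleGraph (Σ i, W i) where
  Adj x y := ∃ (i : ι) (a b : W i), (G i).Adj a b ∧ x = ⟨i, a⟩ ∧ y = ⟨i, b⟩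
  symm := ⟨by rintro x y ⟨i, a, b, h, rfl, rfl⟩; exact ⟨i, b, a, h.symm, rfl, rfl⟩⟩
  loopless := ⟨by
    rintro x ⟨i, a, b, h, rfl, h2⟩
    simp only [Sigma.mk.inj_iff, heq_eq_eq, true_and] at h2
    exact h.ne h2⟩

/-- The bipartite incidence graph of a point-line geometry. -/
def incidenceGraph (P L : Type*) [Membership P L] : SimpleGraph (P ⊕ L) where
  Adj x y := (∃ p l, p ∈ l ∧ x = Sum.inl p ∧ y = Sum.inr l) ∨
             (∃ p l, p ∈ l ∧ x = Sum.inr l ∧ y = Sum.inl p)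
  symm := ⟨by
    rintro x y (⟨p, l, h, rfl, rfl⟩ | ⟨p, l, h, rfl, rfl⟩)
    · exact Or.inr ⟨p, l, h, rfl, rfl⟩
    · exact Or.inl ⟨p, l, h, rfl, rfl⟩⟩
  loopless := ⟨by rintro x (⟨p, l, h, rfl, h2⟩ | ⟨p, l, h, rfl, h2⟩) <;> simp at h2⟩

/-- The bipartite double of a graph. -/
def bipartiteDouble (G : SimpleGraph V) : SimpleGraph (V ⊕ V) where
  Adj x y := (∃ u v, G.Adj u v ∧ x = Sum.inl u ∧ y = Sum.inr v) ∨
             (∃ u v, G.Adj u v ∧ x = Sum.inr u ∧ y = Sum.inl v)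
  symm := ⟨by
    rintro x y (⟨u, v, h, rfl, rfl⟩ | ⟨u, v, h, rfl, rfl⟩)
    · exact Or.inr ⟨v, u, h.symm, rfl, rfl⟩
    · exact Or.inl ⟨v, u, h.symm, rfl, rfl⟩⟩
  loopless := ⟨by rintro x (⟨u, v, h, rfl, h2⟩ | ⟨u, v, h, rfl, h2⟩) <;> simp at h2⟩

end Defs

/-!
If `A` is the adjacency matrix of a `k`-regular graph on `n` vertices with eigenvalues `λᵢ`, then
`|λᵢ| ≤ k` (row sums bound the spectral radius) and `∑ λᵢ² = tr A² = n k`. Summing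
`λᵢ² ≤ k |λᵢ|` gives `n k ≤ k ∑ |λᵢ|`, i.e. `epv ≥ 1`, with equality iff every `λᵢ ∈ {0, ±k}`,
i.e. iff `A³ = k² A`. Entrywise, `A³ = k² A` says that every walk of length three joins adjacent
vertices, and in a `k`-regular graph this forces every component to be complete bipartite with the
neighbourhoods of two adjacent vertices as its sides.
-/

namespace Matrix.IsHermitian

variable {n 𝕜 : Type*} [Fintype n] [DecidableEq n] [RCLike 𝕜] {A : Matrix n n 𝕜}

theorem cfc_eq_cfc_iff (hA : A.IsHermitian) (f g : ℝ → ℝ) :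
    cfc f A = cfc g A ↔ ∀ i, f (hA.eigenvalues i) = g (hA.eigenvalues i) := by
  rw [← Set.forall_mem_range (p := fun x => f x = g x), ← hA.spectrum_real_eq_range_eigenvalues]
  have hfin := A.finite_real_spectrum
  exact ⟨fun h => eqOn_of_cfc_eq_cfc h (hfin.continuousOn f) (hfin.continuousOn g), cfc_congr⟩

theorem trace_cfc (hA : A.IsHermitian) (f : ℝ → ℝ) :
    (cfc f A).trace = ∑ i, (f (hA.eigenvalues i) : 𝕜) := by
  rw [hA.cfc_eq, IsHermitian.cfc, Unitary.conjStarAlgAut_apply, Matrix.trace_mul_cycle,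
    Unitary.coe_star_mul_self, one_mul, Matrix.trace_diagonal]
  rfl

theorem abs_eigenvalues_le (hA : A.IsHermitian) {c : ℝ} (h : ∀ i, ∑ j, ‖A i j‖ ≤ c) (i : n) :
    |hA.eigenvalues i| ≤ c := by
  let _ := Matrix.linftyOpNormedRing (n := n) (α := 𝕜)
  let _ := Matrix.linftyOpNormedAlgebra (n := n) (α := 𝕜) (R := ℝ)
  have : Nonempty n := ⟨i⟩
  have hc : 0 ≤ c := (Finset.sum_nonneg fun j _ => norm_nonneg _).trans (h i)
  calc |hA.eigenvalues i| = ‖hA.eigenvalues i‖ := rfl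
    _ ≤ ‖A‖ := spectrum.norm_le_norm_of_mem (hA.eigenvalues_mem_spectrum_real i)
    _ ≤ c := by
      rw [Matrix.linfty_opNorm_def, ← Real.coe_toNNReal c hc, NNReal.coe_le_coe]
      refine Finset.sup_le fun i _ => ?_
      rw [← NNReal.coe_le_coe, NNReal.coe_sum, Real.coe_toNNReal c hc]
      exact h i

end Matrix.IsHermitian

section SumSqLeSumAbs

variable {ι : Type*} [Fintype ι] {x : ι → ℝ} {k : ℝ}

theorem sq_eq_mul_abs_iff {y : ℝ} (hk : 0 ≤ k) : y ^ 2 = k * |y| ↔ y ^ 3 = k ^ 2 * y := by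
  have h1 : y ^ 2 = k * |y| ↔ |y| = k ∨ |y| = 0 := by
    rw [← sq_abs, sq, mul_comm k, mul_eq_mul_left_iff]
  have h2 : y ^ 3 = k ^ 2 * y ↔ y ^ 2 = k ^ 2 ∨ y = 0 := by
    rw [pow_succ', mul_comm (k ^ 2), mul_eq_mul_left_iff]
  rw [h1, h2, sq_eq_sq_iff_abs_eq_abs, abs_of_nonneg hk, abs_eq_zero]

theorem sq_le_mul_abs {y : ℝ} (h : |y| ≤ k) : y ^ 2 ≤ k * |y| := by
  rw [← sq_abs, sq]
  exact mul_le_mul_of_nonneg_right h (abs_nonneg y)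

theorem sum_sq_le_mul_sum_abs (h : ∀ i, |x i| ≤ k) : ∑ i, x i ^ 2 ≤ k * ∑ i, |x i| := by
  rw [Finset.mul_sum]
  exact Finset.sum_le_sum fun i _ => sq_le_mul_abs (h i)

theorem sum_sq_eq_mul_sum_abs_iff (hk : 0 ≤ k) (h : ∀ i, |x i| ≤ k) :
    ∑ i, x i ^ 2 = k * ∑ i, |x i| ↔ ∀ i, x i ^ 3 = k ^ 2 * x i := by
  rw [Finset.mul_sum, Finset.sum_eq_sum_iff_of_le fun i _ => sq_le_mul_abs (h i)]
  simp only [Finset.mem_univ, true_imp_iff, sq_eq_mul_abs_iff hk]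

end SumSqLeSumAbs

namespace SimpleGraph

section Spectrum

variable {V : Type*} [Fintype V] [DecidableEq V] (G : SimpleGraph V) [DecidableRel G.Adj]

-- `adjEigs` is defined with the classical `DecidableRel` instance.
theorem adjEigs_eq : adjEigs G = (adjMatrix_isHermitian G).eigenvalues := by
  unfold adjEigs
  congr!

theorem sum_adjEigs_sq : ∑ i, adjEigs G i ^ 2 = ∑ v, (G.degree v : ℝ) := by
  have hA := adjMatrix_isHermitian G
  have := hA.trace_cfc (· ^ 2)
  rw [cfc_pow_id _ 2 hA.isSelfAdjoint, sq, Matrix.trace] at this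
  simpa only [adjEigs_eq, Matrix.diag_apply, adjMatrix_mul_self_apply_self,
    RCLike.ofReal_real_eq_id, id] using this.symm

theorem abs_adjEigs_le {d : ℕ} (h : ∀ v, G.degree v ≤ d) (i : V) : |adjEigs G i| ≤ d := by
  rw [adjEigs_eq]
  refine (adjMatrix_isHermitian G).abs_eigenvalues_le (fun v => ?_) i
  have hrow : ∑ j, ‖G.adjMatrix ℝ v j‖ = G.degree v := by
    simp [adjMatrix_apply, apply_ite, ← card_neighborFinset_eq_degree, neighborFinset_eq_filter]
  exact hrow.trans_le (by exact_mod_cast h v)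

theorem adjMatrix_pow_three_eq_smul_iff (r : ℝ) :
    G.adjMatrix ℝ ^ 3 = r • G.adjMatrix ℝ ↔ ∀ i, adjEigs G i ^ 3 = r * adjEigs G i := by
  have hA := adjMatrix_isHermitian G
  rw [← cfc_pow_id (R := ℝ) _ 3 hA.isSelfAdjoint,
    ← cfc_const_mul_id (R := ℝ) r _ hA.isSelfAdjoint, hA.cfc_eq_cfc_iff, adjEigs_eq]

end Spectrum

section Biclique

variable {V W : Type*} {G : SimpleGraph V} {u v w x : V}

-- A graph is a disjoint union of complete bipartite graphs iff every walk of length three joins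
-- adjacent vertices.
def IsBicliqueUnion (G : SimpleGraph V) : Prop :=
  ∀ ⦃u v w x⦄, G.Adj u v → G.Adj v w → G.Adj w x → G.Adj u x

theorem not_adj_of_neighborSet_eq (h : G.neighborSet u = G.neighborSet w) : ¬G.Adj u w :=
  fun huw => G.irrefl (show w ∈ G.neighborSet w from h ▸ huw)

namespace IsBicliqueUnion

theorem of_iso {H : SimpleGraph W} (e : G ≃g H) (h : H.IsBicliqueUnion) : G.IsBicliqueUnion :=
  fun _ _ _ _ huv hvw hwx =>
    e.map_adj_iff.1 (h (e.map_adj_iff.2 huv) (e.map_adj_iff.2 hvw) (e.map_adj_iff.2 hwx))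

theorem neighborSet_eq (h : G.IsBicliqueUnion) (huv : G.Adj u v) (hvw : G.Adj v w) :
    G.neighborSet u = G.neighborSet w := by
  ext x
  exact ⟨fun hux => h hvw.symm huv.symm hux, fun hwx => h huv hvw hwx⟩

theorem adj_or_neighborSet_eq (h : G.IsBicliqueUnion) (huw : G.Reachable u w) :
    G.Adj u w ∨ G.neighborSet u = G.neighborSet w := by
  obtain ⟨p⟩ := huw
  induction p with
  | nil => exact Or.inr rfl
  | cons hux _ ih =>
    rcases ih with hxw | hxw
    · exact Or.inr (h.neighborSet_eq hux hxw)
    · exact Or.inl (show _ ∈ G.neighborSet _ from hxw ▸ hux.symm).symm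

theorem neighborSet_eq_of_not_adj (h : G.IsBicliqueUnion) (huw : G.Reachable u w)
    (hn : ¬G.Adj u w) : G.neighborSet u = G.neighborSet w :=
  (h.adj_or_neighborSet_eq huw).resolve_left hn

theorem adj_iff (h : G.IsBicliqueUnion) (hu : G.Reachable v u) (hw : G.Reachable v w) :
    G.Adj u w ↔ (G.Adj v u ↔ ¬G.Adj v w) := by
  by_cases hvu : G.Adj v u <;> by_cases hvw : G.Adj v w <;> simp only [hvu, hvw, not_true,
    not_false_iff, iff_true, iff_false]
  · exact not_adj_of_neighborSet_eq (h.neighborSet_eq hvu.symm hvw)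
  · exact (show u ∈ G.neighborSet w from h.neighborSet_eq_of_not_adj hw hvw ▸ hvu).symm
  · exact show w ∈ G.neighborSet u from h.neighborSet_eq_of_not_adj hu hvu ▸ hvw
  · exact not_adj_of_neighborSet_eq
      ((h.neighborSet_eq_of_not_adj hu hvu).symm.trans (h.neighborSet_eq_of_not_adj hw hvw))

end IsBicliqueUnion

theorem isBicliqueUnion_completeBipartiteGraph (V W : Type*) :
    (completeBipartiteGraph V W).IsBicliqueUnion := by
  rintro (u | u) (v | v) (w | w) (x | x) <;> simp

end Biclique

end SimpleGraph

section SigmaGraph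

open SimpleGraph

variable {ι ι' V W : Type*} {X : ι → Type*} {Y : ι' → Type*} {G : ∀ i, SimpleGraph (X i)}

theorem sigmaGraph_adj_mk_mk {i : ι} {a b : X i} :
    (sigmaGraph G).Adj ⟨i, a⟩ ⟨i, b⟩ ↔ (G i).Adj a b := by
  refine ⟨?_, fun h => ⟨i, a, b, h, rfl, rfl⟩⟩
  rintro ⟨j, a', b', h, h1, h2⟩
  obtain ⟨rfl, h1⟩ := Sigma.mk.inj_iff.1 h1
  cases h1
  cases (Sigma.mk.inj_iff.1 h2).2
  exact h

theorem fst_eq_of_sigmaGraph_adj {x y : Σ i, X i} (h : (sigmaGraph G).Adj x y) : x.1 = y.1 := by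
  obtain ⟨i, a, b, -, rfl, rfl⟩ := h
  rfl

theorem isBicliqueUnion_sigmaGraph (h : ∀ i, (G i).IsBicliqueUnion) :
    (sigmaGraph G).IsBicliqueUnion := by
  rintro ⟨i, u⟩ ⟨j, v⟩ ⟨l, w⟩ ⟨m, x⟩ huv hvw hwx
  obtain rfl : i = j := fst_eq_of_sigmaGraph_adj huv
  obtain rfl : i = l := fst_eq_of_sigmaGraph_adj hvw
  obtain rfl : i = m := fst_eq_of_sigmaGraph_adj hwx
  exact sigmaGraph_adj_mk_mk.2 (h i (sigmaGraph_adj_mk_mk.1 huv) (sigmaGraph_adj_mk_mk.1 hvw)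
    (sigmaGraph_adj_mk_mk.1 hwx))

def SimpleGraph.Iso.sigmaGraphCongr {H : ∀ i, SimpleGraph (Y i)} (σ : ι ≃ ι')
    (e : ∀ i, G i ≃g H (σ i)) : sigmaGraph G ≃g sigmaGraph H where
  toEquiv := Equiv.sigmaCongr σ fun i => (e i).toEquiv
  map_rel_iff' := by
    rintro ⟨i, a⟩ ⟨j, b⟩
    change (sigmaGraph H).Adj ⟨σ i, e i a⟩ ⟨σ j, e j b⟩ ↔ _
    constructor
    · intro hab
      obtain rfl : i = j := σ.injective (fst_eq_of_sigmaGraph_adj hab)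
      exact sigmaGraph_adj_mk_mk.2 ((e i).map_adj_iff.1 (sigmaGraph_adj_mk_mk.1 hab))
    · intro hab
      obtain rfl : i = j := fst_eq_of_sigmaGraph_adj hab
      exact sigmaGraph_adj_mk_mk.2 ((e i).map_adj_iff.2 (sigmaGraph_adj_mk_mk.1 hab))

def SimpleGraph.isoSigmaGraphInduce (G : SimpleGraph V) (c : V → ι)
    (hc : ∀ ⦃x y⦄, G.Adj x y → c x = c y) :
    G ≃g sigmaGraph (fun i => G.induce {x | c x = i}) :=
  Iso.symm
    { toEquiv := Equiv.sigmaFiberEquiv c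
      map_rel_iff' := by
        rintro ⟨-, x, rfl⟩ ⟨-, y, rfl⟩
        change G.Adj x y ↔ _
        constructor
        · intro hxy
          exact ⟨c y, ⟨x, hc hxy⟩, ⟨y, rfl⟩, hxy, Sigma.subtype_ext (hc hxy) rfl, rfl⟩
        · rintro ⟨i, a, b, hab, h1, h2⟩
          obtain rfl : x = a := congrArg (fun p : Σ i, {x // c x = i} => (p.2 : V)) h1
          obtain rfl : y = b := congrArg (fun p : Σ i, {x // c x = i} => (p.2 : V)) h2
          exact hab }

theorem nonempty_iso_completeBipartiteGraph [Finite W] {H : SimpleGraph W} (s : W → Prop)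
    (h : ∀ x y, H.Adj x y ↔ (s x ↔ ¬s y)) {k : ℕ} (hs : Nat.card {x // s x} = k)
    (hs' : Nat.card {x // ¬s x} = k) :
    Nonempty (H ≃g completeBipartiteGraph (Fin k) (Fin k)) := by
  classical
  let e : completeBipartiteGraph {x // s x} {x // ¬s x} ≃g H :=
    { toEquiv := Equiv.sumCompl s
      map_rel_iff' := by rintro (a | a) (b | b) <;> simp [h, a.2, b.2] }
  exact ⟨(completeBipartiteGraphCongr (Finite.equivFinOfCardEq hs)
    (Finite.equivFinOfCardEq hs')).comp e.symm⟩

end SigmaGraph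

namespace SimpleGraph

variable {V : Type*} [Fintype V] [DecidableEq V] {G : SimpleGraph V} [DecidableRel G.Adj]
  {k : ℕ}

theorem adjMatrix_pow_three_apply {α : Type*} [Semiring α] (u x : V) :
    (G.adjMatrix α ^ 3) u x =
      ∑ w ∈ G.neighborFinset x, ∑ v ∈ G.neighborFinset w, G.adjMatrix α u v := by
  simp only [pow_three', mul_adjMatrix_apply]

namespace IsBicliqueUnion

theorem of_adjMatrix_pow_three_eq_smul {r : ℝ} (h : G.adjMatrix ℝ ^ 3 = r • G.adjMatrix ℝ) :
    G.IsBicliqueUnion := by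
  intro u v w x huv hvw hwx
  have hnonneg : ∀ a b, 0 ≤ G.adjMatrix ℝ a b := fun a b => by
    rw [adjMatrix_apply]; split_ifs <;> norm_num
  have hpos : 0 < (G.adjMatrix ℝ ^ 3) u x := by
    rw [adjMatrix_pow_three_apply]
    calc (0 : ℝ) < G.adjMatrix ℝ u v := by simp [huv]
      _ ≤ ∑ v ∈ G.neighborFinset w, G.adjMatrix ℝ u v :=
        Finset.single_le_sum (f := fun v => G.adjMatrix ℝ u v) (fun _ _ => hnonneg _ _)
          ((G.mem_neighborFinset w v).2 hvw.symm)
      _ ≤ _ := Finset.single_le_sum (f := fun w => ∑ v ∈ G.neighborFinset w, G.adjMatrix ℝ u v)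
        (fun _ _ => Finset.sum_nonneg fun _ _ => hnonneg _ _)
        ((G.mem_neighborFinset x w).2 hwx.symm)
  by_contra hux
  simp [h, hux] at hpos

theorem adjMatrix_pow_three_eq_smul (h : G.IsBicliqueUnion) (hreg : G.IsRegularOfDegree k) :
    G.adjMatrix ℝ ^ 3 = ((k : ℝ) ^ 2) • G.adjMatrix ℝ := by
  ext u x
  rw [adjMatrix_pow_three_apply, Matrix.smul_apply, adjMatrix_apply]
  by_cases hux : G.Adj u x
  · have hrow :
        ∀ w ∈ G.neighborFinset x, ∑ v ∈ G.neighborFinset w, G.adjMatrix ℝ u v = k := by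
      intro w hw
      rw [mem_neighborFinset] at hw
      rw [Finset.sum_congr rfl fun v hv => ?_, Finset.sum_const, card_neighborFinset_eq_degree,
        hreg.degree_eq, nsmul_one]
      rw [mem_neighborFinset] at hv
      simp [adjMatrix_apply, (h hv.symm hw.symm hux.symm).symm]
    rw [Finset.sum_congr rfl hrow, Finset.sum_const, card_neighborFinset_eq_degree,
      hreg.degree_eq, if_pos hux]
    simp [sq]
  · rw [if_neg hux, smul_zero]
    refine Finset.sum_eq_zero fun w hw => Finset.sum_eq_zero fun v hv => ?_
    rw [mem_neighborFinset] at hv hw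
    simpa [adjMatrix_apply] using fun huv => hux (h huv hv.symm hw.symm)

theorem nonempty_induce_iso (h : G.IsBicliqueUnion) (hreg : G.IsRegularOfDegree k) (hk : 1 ≤ k)
    (c : G.ConnectedComponent) :
    Nonempty (G.induce {x | G.connectedComponentMk x = c} ≃g
      completeBipartiteGraph (Fin k) (Fin k)) := by
  obtain ⟨r, rfl⟩ := c.exists_rep
  obtain ⟨v, hrv⟩ := (G.degree_pos_iff_exists_adj r).1 (hreg.degree_eq r ▸ hk)
  have reach {x : V} (hx : G.connectedComponentMk x = G.connectedComponentMk r) :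
      G.Reachable r x := (ConnectedComponent.exact hx).symm
  have card_eq {q : V → Prop} {a : V}
      (hq : ∀ x, G.connectedComponentMk x = G.connectedComponentMk r ∧ q x ↔ G.Adj a x) :
      Nat.card {x : {x | G.connectedComponentMk x = G.connectedComponentMk r} // q x} = k := by
    calc Nat.card _ = Nat.card (G.neighborSet a) :=
          Nat.card_congr ((Equiv.subtypeSubtypeEquivSubtypeInter _ q).trans
            (Equiv.subtypeEquivRight hq))
      _ = k := by rw [Nat.card_eq_fintype_card, card_neighborSet_eq_degree, hreg.degree_eq]
  refine nonempty_iso_completeBipartiteGraph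
    (fun x : {x | G.connectedComponentMk x = G.connectedComponentMk r} => G.Adj r x)
    (fun x y => h.adj_iff (reach x.2) (reach y.2)) ?_ ?_
  · refine card_eq fun x => ⟨And.right, fun hrx => ⟨?_, hrx⟩⟩
    exact ConnectedComponent.sound hrx.reachable.symm
  · refine card_eq (q := fun x => ¬G.Adj r x) (a := v)
      fun x => ⟨fun ⟨hx, hrx⟩ => ?_, fun hvx => ⟨?_, ?_⟩⟩
    · exact (show v ∈ G.neighborSet x from
        h.neighborSet_eq_of_not_adj (reach hx) hrx ▸ hrv).symm
    · exact ConnectedComponent.sound (hvx.symm.reachable.trans hrv.symm.reachable)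
    · exact not_adj_of_neighborSet_eq (h.neighborSet_eq hrv hvx)

theorem exists_iso_sigmaGraph (h : G.IsBicliqueUnion) (hreg : G.IsRegularOfDegree k)
    (hk : 1 ≤ k) : ∃ t : ℕ, Nonempty
      (G ≃g sigmaGraph (fun _ : Fin t => completeBipartiteGraph (Fin k) (Fin k))) :=
  ⟨Nat.card G.ConnectedComponent,
    ⟨(Iso.sigmaGraphCongr (Finite.equivFin _) fun c => (h.nonempty_induce_iso hreg hk c).some).comp
      (G.isoSigmaGraphInduce G.connectedComponentMk fun _ _ hxy =>
        ConnectedComponent.sound hxy.reachable)⟩⟩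

end IsBicliqueUnion

theorem isBicliqueUnion_of_iso_sigmaGraph {t : ℕ}
    (e : G ≃g sigmaGraph (fun _ : Fin t => completeBipartiteGraph (Fin k) (Fin k))) :
    G.IsBicliqueUnion :=
  (isBicliqueUnion_sigmaGraph fun _ => isBicliqueUnion_completeBipartiteGraph _ _).of_iso e

end SimpleGraph

/-- the energy per vertex of a k-regular graph is at least 1, with
equality iff the graph is a disjoint union of copies of K_{k,k}. -/
theorem one_le_epv_of_regular {V : Type*} [Fintype V] [DecidableEq V] [Nonempty V]
    (G : SimpleGraph V) [DecidableRel G.Adj] (k : ℕ) (hk : 1 ≤ k)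
    (hreg : G.IsRegularOfDegree k) :
    1 ≤ epv G ∧
    (epv G = 1 ↔ ∃ t : ℕ, Nonempty
      (G ≃g sigmaGraph (fun _ : Fin t => completeBipartiteGraph (Fin k) (Fin k)))) := by
  have hn : (0 : ℝ) < Fintype.card V := by exact_mod_cast Fintype.card_pos
  have hk' : (0 : ℝ) < k := by exact_mod_cast hk
  have hsq : ∑ i, adjEigs G i ^ 2 = Fintype.card V * k := by
    simp [SimpleGraph.sum_adjEigs_sq, hreg.degree_eq]
  have hle : ∀ i, |adjEigs G i| ≤ k := G.abs_adjEigs_le fun v => (hreg.degree_eq v).le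
  have hepv : epv G = (∑ i, |adjEigs G i|) / Fintype.card V := rfl
  constructor
  · rw [hepv, one_le_div hn]
    have := sum_sq_le_mul_sum_abs hle
    rw [hsq, mul_comm] at this
    exact le_of_mul_le_mul_left this hk'
  · have heq : epv G = 1 ↔ ∑ i, adjEigs G i ^ 2 = k * ∑ i, |adjEigs G i| := by
      rw [hepv, div_eq_one_iff_eq hn.ne', hsq, mul_comm, mul_right_inj' hk'.ne', eq_comm]
    rw [heq, sum_sq_eq_mul_sum_abs_iff hk'.le hle,
      ← SimpleGraph.adjMatrix_pow_three_eq_smul_iff]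
    refine ⟨fun h3 => ?_, fun ⟨_, ⟨e⟩⟩ => ?_⟩
    · exact (SimpleGraph.IsBicliqueUnion.of_adjMatrix_pow_three_eq_smul h3).exists_iso_sigmaGraph
        hreg hk
    · exact (SimpleGraph.isBicliqueUnion_of_iso_sigmaGraph e).adjMatrix_pow_three_eq_smul hreg
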